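/- Let p ∈ (1, ∞) and f ∈ L^p(∂T, ν). Then for ν-almost every ω ∈ ∂T, lim_{j → −∞} 𝒫f(ω(j)) = f(ω). -/

import Mathlib

/-!
The sectors of level `-n` partition `∂T` into countably many pieces (`T` is countable, being
locally finite and connected) and generate a σ-algebra `ℱ n`. These increase with `n`, and since
a sector is a countable union of the sectors of any lower level contained in it, together they
generate the whole σ-algebra. A conditional expectation is constant on the atoms of a partition,
so on the finite measure space `(∂T_{x₀}, ν)` with `ℓ(x₀) = 0` the value `E[f | ℱ n](ω)` is the
average of `f` over `∂T_{ω(-n)}`, that is `𝒫f(ω(-n))`. Lévy's upward theorem then gives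
`𝒫f(ω(-n)) → f(ω)` for almost every `ω ∈ ∂T_{x₀}`, and the countably many sectors of level `0`
cover `∂T`. As `p > 1`, `f` is integrable on every sector.
-/

open MeasureTheory
open scoped ENNReal NNReal

/-- The punctured boundary `∂T` of the tree: maps `ω : ℤ → T` with `lev (ω j) = j`
and `par (ω j) = ω (j+1)`. -/
def PBoundary {T : Type*} (par : T → T) (lev : T → ℤ) : Type _ :=
  {ω : ℤ → T // (∀ j : ℤ, lev (ω j) = j) ∧ ∀ j : ℤ, par (ω j) = ω (j + 1)}

/-- The boundary sector `∂T_x`. -/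
def sector {T : Type*} (par : T → T) (lev : T → ℤ) (x : T) : Set (PBoundary par lev) :=
  {ω : PBoundary par lev | ω.1 (lev x) = x}

/-- The σ-algebra on `∂T` generated by the sectors. -/
instance {T : Type*} (par : T → T) (lev : T → ℤ) : MeasurableSpace (PBoundary par lev) :=
  MeasurableSpace.generateFrom (Set.range (sector par lev))

/-- The flow measure `m_ν x = ν (∂T_x)` (as a real number). -/
noncomputable def mnu {T : Type*} (par : T → T) (lev : T → ℤ)
    (ν : Measure (PBoundary par lev)) (x : T) : ℝ :=
  (ν (sector par lev x)).toReal

/-- The Poisson integral operator `𝒫 g (x) = m_ν(x)⁻¹ ∫_{∂T_x} g dν`. -/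
noncomputable def poisson {T : Type*} (par : T → T) (lev : T → ℤ)
    (ν : Measure (PBoundary par lev)) (g : PBoundary par lev → ℝ) (x : T) : ℝ :=
  (mnu par lev ν x)⁻¹ * ∫ ω in sector par lev x, g ω ∂ν

open Filter Set Topology

theorem MeasurableSpace.mem_iff_mem_of_measurableSet_generateFrom_of_pairwiseDisjoint
    {α : Type*} {𝒞 : Set (Set α)} (h𝒞 : 𝒞.PairwiseDisjoint id) {A : Set α} (hA : A ∈ 𝒞)
    {a b : α} (ha : a ∈ A) (hb : b ∈ A) {s : Set α} (hs : MeasurableSet[generateFrom 𝒞] s) :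
    a ∈ s ↔ b ∈ s := by
  induction s, hs using MeasurableSpace.generateFrom_induction with
  | hC t ht _ =>
    have key : ∀ {c d}, c ∈ A → d ∈ A → c ∈ t → d ∈ t := fun hc hd hct => by
      obtain rfl : t = A := h𝒞.elim ht hA (not_disjoint_iff.2 ⟨_, hct, hc⟩)
      exact hd
    exact ⟨key ha hb, key hb ha⟩
  | empty => rfl
  | compl t _ ih => exact not_congr ih
  | iUnion s _ ih => simp only [mem_iUnion, ih]

theorem MeasureTheory.condExp_eq_setAverage_of_atom {α E : Type*} {m m₀ : MeasurableSpace α}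
    {μ : Measure α} [NormedAddCommGroup E] [NormedSpace ℝ E] [CompleteSpace E] (hm : m ≤ m₀)
    [SigmaFinite (μ.trim hm)] {f : α → E} (hf : Integrable f μ) {A : Set α}
    (hA : MeasurableSet[m] A) (hμA₀ : μ A ≠ 0) (hμA : μ A ≠ ∞)
    (hatom : ∀ s, MeasurableSet[m] s → ∀ a ∈ A, ∀ b ∈ A, a ∈ s → b ∈ s) {a : α} (ha : a ∈ A) :
    μ[f | m] a = ⨍ x in A, f x ∂μ := by
  borelize E
  have hconst : EqOn (μ[f | m]) (fun _ => μ[f | m] a) A := fun b hb =>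
    hatom _ (stronglyMeasurable_condExp.measurable (measurableSet_singleton _)) a ha b hb rfl
  rw [setAverage_eq, ← setIntegral_condExp hm hf hA, setIntegral_congr_fun (hm _ hA) hconst,
    setIntegral_const, smul_smul, inv_mul_cancel₀ ((measureReal_ne_zero_iff hμA).2 hμA₀),
    one_smul]

theorem MeasureTheory.Filtration.tendsto_ae_condExp_of_iSup_eq {Ω : Type*} {m₀ : MeasurableSpace Ω}
    {μ : Measure Ω} [IsFiniteMeasure μ] {ℱ : Filtration ℕ m₀} (hℱ : ⨆ n, ℱ n = m₀)
    {f : Ω → ℝ} (hf : Integrable f μ) :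
    ∀ᵐ ω ∂μ, Tendsto (fun n => μ[f | ℱ n] ω) atTop (𝓝 (f ω)) := by
  have hlim : μ[f | ⨆ n, ℱ n] =ᵐ[μ] f := by
    rw [hℱ]
    exact condExp_of_aestronglyMeasurable' le_rfl hf.aestronglyMeasurable hf
  filter_upwards [tendsto_ae_condExp f, hlim] with ω hω hfω
  rwa [hfω] at hω

theorem Int.tendsto_atBot_iff_tendsto_neg_natCast_atTop {β : Type*} {l : Filter β} {u : ℤ → β} :
    Tendsto u atBot l ↔ Tendsto (fun n : ℕ => u (-n)) atTop l := by
  rw [← map_neg_atTop, ← Nat.map_cast_int_atTop, map_map, tendsto_map'_iff]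
  rfl

section Tree

variable {T : Type*} {par : T → T} {lev : T → ℤ}

theorem finite_setOf_iterate_eq (hfin : ∀ x : T, {y : T | par y = x}.Finite) (n : ℕ) (z : T) :
    {y : T | par^[n] y = z}.Finite := by
  induction n generalizing z with
  | zero => simp
  | succ n ih => exact (ih z).preimage' fun w _ => hfin w

theorem countable_of_finite_fibers_of_exists_iterate_eq
    (hfin : ∀ x : T, {y : T | par y = x}.Finite)
    (hconn : ∀ x y : T, ∃ n m : ℕ, par^[n] x = par^[m] y) : Countable T := by
  cases isEmpty_or_nonempty T with
  | inl => infer_instance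
  | inr hT =>
    obtain ⟨t⟩ := hT
    have hcover : (univ : Set T) ⊆ ⋃ (n : ℕ) (m : ℕ), {y | par^[n] y = par^[m] t} := fun y _ =>
      mem_iUnion₂.2 (hconn y t)
    exact countable_univ_iff.1 <| (countable_iUnion fun n => countable_iUnion fun m =>
      (finite_setOf_iterate_eq hfin n _).countable).mono hcover

namespace PBoundary

theorem apply_add_natCast (ω : PBoundary par lev) (j : ℤ) (n : ℕ) :
    ω.1 (j + n) = par^[n] (ω.1 j) := by
  induction n with
  | zero => simp
  | succ n ih =>
    rw [Function.iterate_succ_apply', ← ih, ω.2.2, Nat.cast_succ, add_assoc]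

theorem apply_eq_iterate (ω : PBoundary par lev) {i j : ℤ} (h : i ≤ j) :
    ω.1 j = par^[(j - i).toNat] (ω.1 i) := by
  rw [← apply_add_natCast, Int.toNat_of_nonneg (by omega), add_sub_cancel]

end PBoundary

theorem measurableSet_sector (x : T) : MeasurableSet (sector par lev x) :=
  MeasurableSpace.measurableSet_generateFrom ⟨x, rfl⟩

theorem mem_sector_apply_iff {ω ω' : PBoundary par lev} {j : ℤ} :
    ω' ∈ sector par lev (ω.1 j) ↔ ω'.1 j = ω.1 j := by
  rw [sector, mem_ofPred_eq, ω.2.1]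

theorem mem_sector_apply_self (ω : PBoundary par lev) (j : ℤ) : ω ∈ sector par lev (ω.1 j) :=
  mem_sector_apply_iff.2 rfl

theorem sector_apply_subset_sector_apply (ω : PBoundary par lev) {i j : ℤ} (h : i ≤ j) :
    sector par lev (ω.1 i) ⊆ sector par lev (ω.1 j) := fun ω' hω' => by
  rw [mem_sector_apply_iff] at hω' ⊢
  rw [ω'.apply_eq_iterate h, hω', ← ω.apply_eq_iterate h]

theorem poisson_eq_setAverage (ν : Measure (PBoundary par lev)) (g : PBoundary par lev → ℝ)
    (x : T) : poisson par lev ν g x = ⨍ ω in sector par lev x, g ω ∂ν := by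
  rw [setAverage_eq, smul_eq_mul]
  rfl

variable (par lev) in
abbrev levelSigmaAlgebra (k : ℤ) : MeasurableSpace (PBoundary par lev) :=
  MeasurableSpace.generateFrom (sector par lev '' {x | lev x = k})

theorem pairwiseDisjoint_sector_level (k : ℤ) :
    (sector par lev '' {x | lev x = k}).PairwiseDisjoint id := by
  rintro _ ⟨x, hx, rfl⟩ _ ⟨y, hy, rfl⟩ hne
  refine disjoint_left.2 fun ω (hωx : ω.1 (lev x) = x) (hωy : ω.1 (lev y) = y) => hne ?_
  rw [mem_ofPred_eq] at hx hy
  rw [← hωx, ← hωy, hx, hy]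

theorem levelSigmaAlgebra_le (k : ℤ) :
    levelSigmaAlgebra par lev k ≤ (inferInstance : MeasurableSpace (PBoundary par lev)) :=
  MeasurableSpace.generateFrom_mono (image_subset_range _ _)

theorem measurableSet_levelSigmaAlgebra_sector [Countable T] {k : ℤ} {x : T} (h : k ≤ lev x) :
    MeasurableSet[levelSigmaAlgebra par lev k] (sector par lev x) := by
  have hunion : sector par lev x =
      ⋃ y ∈ {y | lev y = k ∧ sector par lev y ⊆ sector par lev x}, sector par lev y := by
    refine Subset.antisymm (fun ω (hω : ω.1 (lev x) = x) => mem_biUnion ?_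
      (mem_sector_apply_self ω k)) (iUnion₂_subset fun y hy => hy.2)
    refine ⟨ω.2.1 k, ?_⟩
    simpa only [hω] using sector_apply_subset_sector_apply ω h
  rw [hunion]
  exact MeasurableSet.biUnion (to_countable _) fun y hy =>
    MeasurableSpace.measurableSet_generateFrom ⟨y, hy.1, rfl⟩

theorem levelSigmaAlgebra_antitone [Countable T] : Antitone (levelSigmaAlgebra par lev) :=
  fun _ _ hjk => MeasurableSpace.generateFrom_le <| by
    rintro _ ⟨x, hx, rfl⟩
    exact measurableSet_levelSigmaAlgebra_sector (hjk.trans_eq hx.symm)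

variable (par lev) in
def levelFiltration [Countable T] :
    Filtration ℕ (inferInstance : MeasurableSpace (PBoundary par lev)) where
  seq n := levelSigmaAlgebra par lev (-n)
  mono' _ _ h := levelSigmaAlgebra_antitone (neg_le_neg (Nat.cast_le.2 h))
  le' _ := levelSigmaAlgebra_le _

theorem iSup_levelFiltration [Countable T] :
    ⨆ n, levelFiltration par lev n = (inferInstance : MeasurableSpace (PBoundary par lev)) := by
  refine le_antisymm (iSup_le fun n => (levelFiltration par lev).le n) ?_
  refine MeasurableSpace.generateFrom_le ?_
  rintro _ ⟨x, rfl⟩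
  exact le_iSup (levelFiltration par lev) (-lev x).toNat _
    (measurableSet_levelSigmaAlgebra_sector (by omega))

theorem condExp_levelFiltration_eq_poisson [Countable T] {ν : Measure (PBoundary par lev)}
    (hν₀ : ∀ x, ν (sector par lev x) ≠ 0) {x₀ : T} (hν : ν (sector par lev x₀) ≠ ∞)
    (hx₀ : lev x₀ = 0) {f : PBoundary par lev → ℝ} (hf : IntegrableOn f (sector par lev x₀) ν)
    {ω : PBoundary par lev} (hω : ω ∈ sector par lev x₀) (n : ℕ) :
    (ν.restrict (sector par lev x₀))[f | levelFiltration par lev n] ω =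
      poisson par lev ν f (ω.1 (-n)) := by
  have : IsFiniteMeasure (ν.restrict (sector par lev x₀)) := isFiniteMeasure_restrict.2 hν
  set A := sector par lev (ω.1 (-n))
  have hA : A ⊆ sector par lev x₀ := by
    have hω₀ : ω.1 0 = x₀ := hx₀ ▸ hω
    simpa only [hω₀] using sector_apply_subset_sector_apply ω (by omega : -(n : ℤ) ≤ 0)
  have hAgen : A ∈ sector par lev '' {x | lev x = -n} := ⟨_, ω.2.1 _, rfl⟩
  rw [condExp_eq_setAverage_of_atom ((levelFiltration par lev).le n) hf
      (MeasurableSpace.measurableSet_generateFrom hAgen) ?_ ?_ ?_ (mem_sector_apply_self ω _),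
    Measure.restrict_restrict_of_subset hA, poisson_eq_setAverage]
  · rw [Measure.restrict_apply (measurableSet_sector _), inter_eq_left.2 hA]
    exact hν₀ _
  · exact measure_ne_top _ _
  · exact fun s hs a ha b hb =>
      (MeasurableSpace.mem_iff_mem_of_measurableSet_generateFrom_of_pairwiseDisjoint
        (pairwiseDisjoint_sector_level _) hAgen ha hb hs).1

theorem ae_restrict_tendsto_poisson [Countable T] {ν : Measure (PBoundary par lev)}
    (hν₀ : ∀ x, ν (sector par lev x) ≠ 0) {x₀ : T} (hν : ν (sector par lev x₀) ≠ ∞)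
    (hx₀ : lev x₀ = 0) {f : PBoundary par lev → ℝ} (hf : IntegrableOn f (sector par lev x₀) ν) :
    ∀ᵐ ω ∂ν.restrict (sector par lev x₀),
      Tendsto (fun j => poisson par lev ν f (ω.1 j)) atBot (𝓝 (f ω)) := by
  have : IsFiniteMeasure (ν.restrict (sector par lev x₀)) := isFiniteMeasure_restrict.2 hν
  filter_upwards [ae_restrict_mem (measurableSet_sector x₀),
    (levelFiltration par lev).tendsto_ae_condExp_of_iSup_eq iSup_levelFiltration hf]
    with ω hω hlim
  rw [Int.tendsto_atBot_iff_tendsto_neg_natCast_atTop]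
  exact hlim.congr fun n => condExp_levelFiltration_eq_poisson hν₀ hν hx₀ hf hω n

end Tree

theorem stmt8_general {T : Type*} (par : T → T) (lev : T → ℤ)
    (hfin : ∀ x : T, {y : T | par y = x}.Finite)
    (hconn : ∀ x y : T, ∃ n m : ℕ, par^[n] x = par^[m] y)
    (ν : Measure (PBoundary par lev))
    (hν : ∀ x : T, 0 < ν (sector par lev x) ∧ ν (sector par lev x) < ⊤)
    (p : ℝ) (hp : 1 < p)
    (f : PBoundary par lev → ℝ) (hf : MemLp f (ENNReal.ofReal p) ν) :
    ∀ᵐ ω ∂ν, Filter.Tendsto (fun j : ℤ => poisson par lev ν f (ω.1 j))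
      Filter.atBot (nhds (f ω)) := by
  have : Countable T := countable_of_finite_fibers_of_exists_iterate_eq hfin hconn
  have hcover : ⋃ x : {x : T // lev x = 0}, sector par lev x = univ :=
    eq_univ_of_forall fun ω => mem_iUnion.2 ⟨⟨ω.1 0, ω.2.1 0⟩, mem_sector_apply_self ω 0⟩
  have hsectors := (ae_restrict_iUnion_iff _ _).2 fun x : {x : T // lev x = 0} =>
    have : IsFiniteMeasure (ν.restrict (sector par lev x)) := isFiniteMeasure_restrict.2 (hν x).2.ne
    ae_restrict_tendsto_poisson (fun y => (hν y).1.ne') (hν x).2.ne x.2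
      ((hf.restrict _).integrable (ENNReal.one_le_ofReal.2 hp.le))
  rwa [hcover, Measure.restrict_univ] at hsectors

/-- For `p ∈ (1,∞)` and `f ∈ L^p(∂T,ν)`, for ν-almost every `ω ∈ ∂T`
one has `lim_{j → −∞} 𝒫f(ω(j)) = f(ω)`. -/
theorem stmt8 {T : Type*} [Nonempty T] (par : T → T) (lev : T → ℤ)
    (hlev : ∀ x : T, lev (par x) = lev x + 1)
    (hfin : ∀ x : T, {y : T | par y = x}.Finite)
    (hsucc : ∀ x : T, ∃ y : T, par y = x)
    (hconn : ∀ x y : T, ∃ n m : ℕ, par^[n] x = par^[m] y)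
    (ν : Measure (PBoundary par lev))
    (hν : ∀ x : T, 0 < ν (sector par lev x) ∧ ν (sector par lev x) < ⊤)
    (p : ℝ) (hp : 1 < p)
    (f : PBoundary par lev → ℝ) (hf : MemLp f (ENNReal.ofReal p) ν) :
    ∀ᵐ ω ∂ν, Filter.Tendsto (fun j : ℤ => poisson par lev ν f (ω.1 j))
      Filter.atBot (nhds (f ω)) :=
  stmt8_general par lev hfin hconn ν hν p hp f hf
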